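/- For k ≤ n−2, the diameter of the polar Grassmann graph Γ_k(n) of the thin polar space Π_n is exactly k+2. -/

import Mathlib

/-!
Write `d(X, Y) = #(X \ Y)` and `c(X, Y) = #(X ∩ -Y)` for the number of "conflicts" `x ∈ X`
with `-x ∈ Y`; always `c ≤ d`. Exchanging a conflict `x` (or any `x ∈ X \ Y` if there is none)
for some `y ∈ Y \ X` with `-y ∉ X` is an edge, and it lowers `d` by one and `c` by one unless
`c = 0`. Such a `y` exists as long as `c < d`, because `y ↦ -y` maps the conflicts of `Y`
against `X` onto those of `X` against `Y`. Hence `X` and `Y` are at distance at most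
`d ≤ k + 1` when `c < d`. When `c = d ≥ 1`, every point of `Y` is `±` a point of `X`, and one
first exchanges a conflict for a point `a` with `±a ∉ X`, which exists because `k + 1 < n`;
afterwards `c < d`, so the diameter is at most `k + 2`.

Conversely, a neighbour of `X` meets `-X` in no point, and along an edge the intersection with a
fixed set grows by at most one point, so `X` and `-X` are at distance at least `k + 2`.
-/

open Finset

/-- The point set J = {±1, …, ±n} of the thin polar space Π_n. -/
noncomputable def polarJ (n : ℕ) : Finset ℤ := (Finset.Icc (-(n : ℤ)) (n : ℤ)).erase 0

/-- A subset of J is singular iff it contains no pair {i, -i}. -/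
def Sing (n : ℕ) (S : Finset ℤ) : Prop := S ⊆ polarJ n ∧ ∀ i ∈ S, -i ∉ S

/-- Vertices of the polar Grassmann graph Γ_k(n): (k+1)-element singular subsets. -/
def Vert (n k : ℕ) := {S : Finset ℤ // Sing n S ∧ S.card = k + 1}

/-- The polar Grassmann graph Γ_k(n). -/
def Gr (n k : ℕ) : SimpleGraph (Vert n k) :=
  SimpleGraph.fromRel fun X Y => (X.1 ∩ Y.1).card = k ∧ Sing n (X.1 ∪ Y.1)

open scoped Pointwise

section InvolutiveNeg

variable {α : Type*} [DecidableEq α] [InvolutiveNeg α]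

lemma card_inter_neg_comm (X Y : Finset α) : #(X ∩ -Y) = #(Y ∩ -X) := by
  have : -(X ∩ -Y) = Y ∩ -X := by
    ext i
    simp only [mem_neg', mem_inter, neg_neg, and_comm]
  rw [← this, card_neg]

lemma inter_neg_subset_sdiff {X Y : Finset α} (hY : ∀ i ∈ Y, -i ∉ Y) : X ∩ -Y ⊆ X \ Y := by
  intro i hi
  rw [mem_inter, mem_neg'] at hi
  exact mem_sdiff.2 ⟨hi.1, fun hiY => hY i hiY hi.2⟩

end InvolutiveNeg

lemma exists_mem_card_erase_eq_card_sub_one {α : Type*} [DecidableEq α] {s t : Finset α}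
    (hst : s ⊆ t) (ht : t.Nonempty) : ∃ x ∈ t, #(s.erase x) = #s - 1 := by
  rcases s.eq_empty_or_nonempty with rfl | ⟨x, hx⟩
  · obtain ⟨x, hx⟩ := ht
    exact ⟨x, hx, by simp⟩
  · exact ⟨x, hst hx, card_erase_of_mem hx⟩

lemma ne_zero_of_mem_polarJ {n : ℕ} {i : ℤ} (hi : i ∈ polarJ n) : i ≠ 0 :=
  (mem_erase.1 hi).1

lemma neg_mem_polarJ {n : ℕ} {i : ℤ} (hi : i ∈ polarJ n) : -i ∈ polarJ n := by
  simp only [polarJ, mem_erase, mem_Icc] at hi ⊢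
  omega

lemma card_polarJ (n : ℕ) : #(polarJ n) = 2 * n := by
  rw [polarJ, card_erase_of_mem (by simp), Int.card_Icc]
  omega

lemma exists_mem_polarJ_notMem {n : ℕ} {S : Finset ℤ} (hS : #S < n) :
    ∃ a ∈ polarJ n, a ∉ S ∧ -a ∉ S := by
  have hcard : #(S ∪ -S) < #(polarJ n) := by
    calc #(S ∪ -S) ≤ #S + #(-S) := card_union_le _ _
      _ < 2 * n := by rw [card_neg]; omega
      _ = #(polarJ n) := (card_polarJ n).symm
  obtain ⟨a, ha, haS⟩ := exists_mem_notMem_of_card_lt_card hcard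
  rw [mem_union, mem_neg', not_or] at haS
  exact ⟨a, ha, haS⟩

lemma edist_le_edist_add_one_of_adj {V : Type*} {G : SimpleGraph V} {u v w : V}
    (h : G.Adj u v) : G.edist u w ≤ G.edist v w + 1 :=
  SimpleGraph.edist_triangle.trans
    (by rw [SimpleGraph.edist_eq_one_iff_adj.2 h, add_comm])

namespace Sing

variable {n : ℕ} {S T : Finset ℤ}

lemma mono (hT : Sing n T) (hST : S ⊆ T) : Sing n S :=
  ⟨hST.trans hT.1, fun i hi hni => hT.2 i (hST hi) (hST hni)⟩

lemma neg (hS : Sing n S) : Sing n (-S) := by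
  refine ⟨fun i hi => ?_, fun i hi hni => ?_⟩
  · simpa using neg_mem_polarJ (hS.1 (mem_neg'.1 hi))
  · rw [mem_neg'] at hi hni
    exact hS.2 _ hi hni

lemma insert {z : ℤ} (hS : Sing n S) (hz : z ∈ polarJ n) (hzS : -z ∉ S) :
    Sing n (insert z S) := by
  refine ⟨insert_subset hz hS.1, fun i hi hni => ?_⟩
  rw [mem_insert] at hi hni
  rcases hi with rfl | hi
  · rcases hni with hni | hni
    · exact ne_zero_of_mem_polarJ hz (by omega)
    · exact hzS hni
  · rcases hni with hni | hni
    · exact hzS (by rwa [← hni, neg_neg])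
    · exact hS.2 i hi hni

end Sing

namespace Vert

variable {n k : ℕ}

instance : Neg (Vert n k) :=
  ⟨fun X => ⟨-X.1, X.2.1.neg, by rw [card_neg, X.2.2]⟩⟩

lemma coe_neg (X : Vert n k) : (-X).1 = -X.1 := rfl

lemma eq_of_card_sdiff_eq_zero {X Y : Vert n k} (h : #(X.1 \ Y.1) = 0) : X = Y := by
  rw [card_eq_zero, sdiff_eq_empty_iff_subset] at h
  exact Subtype.ext (eq_of_subset_of_card_le h (by rw [X.2.2, Y.2.2]))

lemma card_sdiff_comm (X Y : Vert n k) : #(X.1 \ Y.1) = #(Y.1 \ X.1) :=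
  Finset.card_sdiff_comm (by rw [X.2.2, Y.2.2])

lemma card_inter_neg_le_card_sdiff (X Y : Vert n k) : #(X.1 ∩ -Y.1) ≤ #(X.1 \ Y.1) :=
  card_le_card (inter_neg_subset_sdiff Y.2.1.2)

lemma subset_union_neg_of_card_sdiff_le {X Y : Vert n k} (h : #(X.1 \ Y.1) ≤ #(X.1 ∩ -Y.1)) :
    Y.1 ⊆ X.1 ∪ -X.1 := by
  have heq : Y.1 ∩ -X.1 = Y.1 \ X.1 := eq_of_subset_of_card_le
    (inter_neg_subset_sdiff X.2.1.2) (by rwa [← card_inter_neg_comm, ← card_sdiff_comm])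
  calc Y.1 = (Y.1 ∩ X.1) ∪ (Y.1 ∩ -X.1) := by rw [heq, union_comm, sdiff_union_inter]
    _ ⊆ X.1 ∪ -X.1 := union_subset_union inter_subset_right inter_subset_right

lemma nonempty (h : k + 1 ≤ n) : Nonempty (Vert n k) := by
  refine ⟨⟨Icc 1 (k + 1 : ℤ), ⟨fun i hi => ?_, fun i hi hni => ?_⟩, ?_⟩⟩
  · simp only [polarJ, mem_erase, mem_Icc] at hi ⊢
    omega
  · rw [mem_Icc] at hi hni
    omega
  · simp

end Vert

namespace Gr

variable {n k : ℕ}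

lemma adj_iff {X Y : Vert n k} :
    (Gr n k).Adj X Y ↔ X ≠ Y ∧ #(X.1 ∩ Y.1) = k ∧ Sing n (X.1 ∪ Y.1) := by
  rw [Gr, SimpleGraph.fromRel_adj, inter_comm Y.1, union_comm Y.1, or_self]

lemma exists_adj_insert_erase {X : Vert n k} {x z : ℤ} (hx : x ∈ X.1) (hz : z ∈ polarJ n)
    (hzX : z ∉ X.1) (hnzX : -z ∉ X.1) :
    ∃ X' : Vert n k, (Gr n k).Adj X X' ∧ X'.1 = insert z (X.1.erase x) := by
  have hsing : Sing n (insert z X.1) := X.2.1.insert hz hnzX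
  have hcard : #(insert z (X.1.erase x)) = k + 1 := by
    rw [card_insert_of_notMem (fun h => hzX (mem_of_mem_erase h)), card_erase_of_mem hx, X.2.2]
    rfl
  refine ⟨⟨_, hsing.mono (insert_subset_insert _ (erase_subset _ _)), hcard⟩, ?_, rfl⟩
  refine adj_iff.2 ⟨fun h => hzX ?_, ?_, hsing.mono ?_⟩
  · rw [congrArg Subtype.val h]
    exact mem_insert_self _ _
  · rw [inter_insert_of_notMem hzX, inter_erase, inter_self, card_erase_of_mem hx, X.2.2]
    rfl
  · exact union_subset (subset_insert _ _) (insert_subset_insert _ (erase_subset _ _))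

lemma card_sdiff_eq_one_of_adj {X Y : Vert n k} (h : (Gr n k).Adj X Y) :
    #(Y.1 \ X.1) = 1 := by
  have := card_sdiff_add_card_inter Y.1 X.1
  rw [inter_comm, (adj_iff.1 h).2.1, Y.2.2] at this
  omega

lemma card_inter_le_of_adj {X Y : Vert n k} (h : (Gr n k).Adj X Y) (T : Finset ℤ) :
    #(Y.1 ∩ T) ≤ #(X.1 ∩ T) + 1 := by
  have hsub : Y.1 ∩ T ⊆ (X.1 ∩ T) ∪ (Y.1 \ X.1) := by
    intro i hi
    rw [mem_inter] at hi
    by_cases hiX : i ∈ X.1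
    · exact mem_union_left _ (mem_inter.2 ⟨hiX, hi.2⟩)
    · exact mem_union_right _ (mem_sdiff.2 ⟨hi.1, hiX⟩)
  calc #(Y.1 ∩ T) ≤ #((X.1 ∩ T) ∪ (Y.1 \ X.1)) := card_le_card hsub
    _ ≤ #(X.1 ∩ T) + #(Y.1 \ X.1) := card_union_le _ _
    _ = #(X.1 ∩ T) + 1 := by rw [card_sdiff_eq_one_of_adj h]

lemma card_inter_le_of_walk {X Y : Vert n k} (w : (Gr n k).Walk X Y) (T : Finset ℤ) :
    #(Y.1 ∩ T) ≤ #(X.1 ∩ T) + w.length := by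
  induction w with
  | nil => simp
  | cons h _ ih =>
    rw [SimpleGraph.Walk.length_cons]
    have := card_inter_le_of_adj h T
    omega

lemma disjoint_neg_of_adj {X Y : Vert n k} (h : (Gr n k).Adj X Y) : Disjoint Y.1 (-X.1) := by
  rw [disjoint_left]
  intro i hiY hiX
  exact (adj_iff.1 h).2.2.2 _ (mem_union_left _ (mem_neg'.1 hiX))
    (by rw [neg_neg]; exact mem_union_right _ hiY)

lemma le_length_of_walk_neg {X Y : Vert n k} (w : (Gr n k).Walk X Y) (hY : Y = -X) :
    k + 2 ≤ w.length := by
  cases w with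
  | nil =>
    obtain ⟨x, hx⟩ := card_pos.1 (by rw [X.2.2]; omega : 0 < #X.1)
    have hx' : x ∈ (-X).1 := by rw [← hY]; exact hx
    exact (X.2.1.2 x hx (mem_neg'.1 hx')).elim
  | @cons _ Z _ h p =>
    have hZY : #(Z.1 ∩ Y.1) = 0 := by
      rw [hY, Vert.coe_neg, card_eq_zero, ← disjoint_iff_inter_eq_empty]
      exact disjoint_neg_of_adj h
    have := card_inter_le_of_walk p Y.1
    rw [hZY, inter_self, Y.2.2] at this
    rw [SimpleGraph.Walk.length_cons]
    omega

lemma le_edist_neg (X : Vert n k) : ((k + 2 : ℕ) : ℕ∞) ≤ (Gr n k).edist X (-X) := by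
  rw [SimpleGraph.edist_eq_sInf]
  exact le_sInf (Set.forall_mem_range.2 fun w => by exact_mod_cast le_length_of_walk_neg w rfl)

lemma edist_le_card_sdiff {X Y : Vert n k}
    (h : #(X.1 ∩ -Y.1) < #(X.1 \ Y.1) ∨ #(X.1 \ Y.1) = 0) :
    (Gr n k).edist X Y ≤ #(X.1 \ Y.1) := by
  induction hd : #(X.1 \ Y.1) generalizing X with
  | zero => simp [Vert.eq_of_card_sdiff_eq_zero hd]
  | succ d ih =>
    rw [hd] at h
    have hc : #(X.1 ∩ -Y.1) < d + 1 := h.resolve_right (Nat.succ_ne_zero d)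
    obtain ⟨y, hyYX, hnyX⟩ : ∃ y ∈ Y.1 \ X.1, -y ∉ X.1 := by
      have hlt : #(Y.1 ∩ -X.1) < #(Y.1 \ X.1) := by
        rw [← card_inter_neg_comm, ← Vert.card_sdiff_comm, hd]
        exact hc
      obtain ⟨y, hy, hyc⟩ := exists_mem_notMem_of_card_lt_card hlt
      exact ⟨y, hy, fun h => hyc (mem_inter.2 ⟨(mem_sdiff.1 hy).1, mem_neg'.2 h⟩)⟩
    obtain ⟨x, hxXY, hxc⟩ := exists_mem_card_erase_eq_card_sub_one
      (inter_neg_subset_sdiff Y.2.1.2) (card_pos.1 (by omega : 0 < #(X.1 \ Y.1)))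
    obtain ⟨hyY, hyX⟩ := mem_sdiff.1 hyYX
    obtain ⟨X', hadj, hX'⟩ :=
      exists_adj_insert_erase (mem_sdiff.1 hxXY).1 (Y.2.1.1 hyY) hyX hnyX
    have hd' : #(X'.1 \ Y.1) = d := by
      rw [hX', insert_sdiff_of_mem _ hyY, erase_sdiff_comm, card_erase_of_mem hxXY, hd]
      rfl
    have hc' : #(X'.1 ∩ -Y.1) = #(X.1 ∩ -Y.1) - 1 := by
      have hy : y ∉ -Y.1 := fun h => Y.2.1.2 y hyY (mem_neg'.1 h)
      rw [hX', insert_inter_of_notMem hy, erase_inter, hxc]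
    calc (Gr n k).edist X Y ≤ (Gr n k).edist X' Y + 1 := edist_le_edist_add_one_of_adj hadj
      _ ≤ d + 1 := by gcongr; exact ih (by omega) hd'
      _ = ((d + 1 : ℕ) : ℕ∞) := by push_cast; rfl

lemma edist_le (hk : k + 2 ≤ n) (X Y : Vert n k) : (Gr n k).edist X Y ≤ ((k + 2 : ℕ) : ℕ∞) := by
  have hdle : #(X.1 \ Y.1) ≤ k + 1 := (card_le_card sdiff_subset).trans X.2.2.le
  by_cases h : #(X.1 ∩ -Y.1) < #(X.1 \ Y.1) ∨ #(X.1 \ Y.1) = 0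
  · exact (edist_le_card_sdiff h).trans (Nat.cast_le.2 (by omega))
  rw [not_or, not_lt] at h
  have hcd := Vert.card_inter_neg_le_card_sdiff X Y
  have hYX := Vert.subset_union_neg_of_card_sdiff_le h.1
  obtain ⟨a, ha, haX, hnaX⟩ := exists_mem_polarJ_notMem (n := n) (S := X.1) (by rw [X.2.2]; omega)
  have haY : a ∉ Y.1 := fun h => by
    rcases mem_union.1 (hYX h) with h | h
    exacts [haX h, hnaX (mem_neg'.1 h)]
  have hnaY : a ∉ -Y.1 := fun h => by
    rcases mem_union.1 (hYX (mem_neg'.1 h)) with h | h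
    exacts [hnaX h, haX (by simpa using mem_neg'.1 h)]
  obtain ⟨x, hx⟩ : (X.1 ∩ -Y.1).Nonempty := card_pos.1 (by omega)
  obtain ⟨X', hadj, hX'⟩ := exists_adj_insert_erase (mem_inter.1 hx).1 ha haX hnaX
  have hd' : #(X'.1 \ Y.1) = #(X.1 \ Y.1) := by
    rw [hX', insert_sdiff_of_notMem _ haY, erase_sdiff_comm,
      card_insert_of_notMem (fun h => haX (mem_sdiff.1 (mem_of_mem_erase h)).1),
      card_erase_of_mem (inter_neg_subset_sdiff Y.2.1.2 hx)]
    omega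
  have hc' : #(X'.1 ∩ -Y.1) = #(X.1 ∩ -Y.1) - 1 := by
    rw [hX', insert_inter_of_notMem hnaY, erase_inter, card_erase_of_mem hx]
  calc (Gr n k).edist X Y ≤ (Gr n k).edist X' Y + 1 := edist_le_edist_add_one_of_adj hadj
    _ ≤ #(X.1 \ Y.1) + 1 := by
        gcongr
        exact hd' ▸ edist_le_card_sdiff (Or.inl (by omega))
    _ ≤ ((k + 2 : ℕ) : ℕ∞) := by exact_mod_cast (by omega : #(X.1 \ Y.1) + 1 ≤ k + 2)

end Gr

/-- For k ≤ n-2, the diameter of the polar Grassmann graph Γ_k(n) is exactly k+2. -/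
theorem stmt5 (n k : ℕ) (hk : k + 2 ≤ n) : (Gr n k).diam = k + 2 := by
  obtain ⟨X⟩ := Vert.nonempty (n := n) (k := k) (by omega)
  have hediam : (Gr n k).ediam = ((k + 2 : ℕ) : ℕ∞) :=
    le_antisymm (SimpleGraph.ediam_le_of_edist_le (Gr.edist_le hk))
      ((Gr.le_edist_neg X).trans SimpleGraph.edist_le_ediam)
  rw [SimpleGraph.diam, hediam, ENat.toNat_natCast]
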